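/- arXiv:2206.08279 — 2 statements merged into one kernel-verified Lean document; each statement's English description precedes it below -/
import Mathlib

section
/- Let μ be a finite positive Borel measure on the unit circle T with infinite support, K_n its Christoffel kernel, w ∈ T, and ζ_{0n}, …, ζ_{nn} ∈ T the zeros of B_{n+1}(w,·). For every polynomial p of degree at most n and every j ∈ {0, …, n}, ∫_T p(z) conj(K_n(ζ_{jn}, z)) / sqrt(K_n(ζ_{jn}, ζ_{jn})) dμ(z) = p(ζ_{jn}) / sqrt(K_n(ζ_{jn}, ζ_{jn})); consequently, for polynomials p, q of degree at most n, ∫_T p conj(q) dμ = Σ_{j=0}^n p(ζ_{jn}) conj(q(ζ_{jn})) / K_n(ζ_{jn}, ζ_{jn}). -/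
open MeasureTheory Polynomial Filter
open scoped ComplexConjugate Topology

/-- The Christoffel kernel `K_n(w,z) = ∑_{j=0}^n conj(φ_j(w)) φ_j(z)`. -/
noncomputable def christoffelK (φ : ℕ → Polynomial ℂ) (n : ℕ) (w z : ℂ) : ℂ :=
  ∑ j ∈ Finset.range (n + 1), conj ((φ j).eval w) * (φ j).eval z

/-- The para-orthogonal polynomial `B_{n+1}(w,z) = (1 − conj(w) z) K_n(w,z)`. -/
noncomputable def paraOrtho (φ : ℕ → Polynomial ℂ) (n : ℕ) (w z : ℂ) : ℂ :=
  (1 - conj w * z) * christoffelK φ n w z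

/-!
The reproducing identity `∫ p conj K_n(u, ·) dμ = p(u)` on `Π_n` only has to be checked on the
orthonormal basis. Write `B_{n+1}(w, ·) = (X - ζ_j) P_j`. On the circle
`(z - ζ_j) conj P_j(z) = -ζ_j (z - w) conj K_n(w, z)`, so the reproducing identity at `w` makes
`P_j` orthogonal to every `q ∈ Π_n` vanishing at `ζ_j`. Testing this with
`q = P_j(ζ_j) K_n(ζ_k, ·) - K_n(ζ_k, ζ_j) P_j` and using `P_j(ζ_k) = 0` gives
`K_n(ζ_k, ζ_j) ‖P_j‖² = 0`, so the kernels at the nodes are orthogonal and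
`q = ∑_j q(ζ_j) K_n(ζ_j, ·) / K_n(ζ_j, ζ_j)` for `q ∈ Π_n`; pairing with `p` gives the quadrature.
-/

open Metric

lemma mul_conj_eq_one_of_mem_sphere {z : ℂ} (hz : z ∈ sphere (0 : ℂ) 1) : z * conj z = 1 := by
  rw [Complex.mul_conj', mem_sphere_zero_iff_norm.mp hz]
  simp

section CircleInner

variable {μ : Measure ℂ} [IsFiniteMeasure μ]

lemma integrableOn_sphere_eval_mul_conj_eval (p q : ℂ[X]) :
    IntegrableOn (fun z => p.eval z * conj (q.eval z)) (sphere 0 1) μ :=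
  (by fun_prop : Continuous fun z => p.eval z * conj (q.eval z)).continuousOn.integrableOn_compact
    (isCompact_sphere 0 1)

/- Integrating over the circle rather than over `ℂ` makes the form sesquilinear for every finite
`μ`; `circleInner_eq_integral` recovers the integral over `ℂ` when `μ` lives on the circle. -/
variable (μ) in
noncomputable def circleInner : ℂ[X] →ₗ[ℂ] ℂ[X] →ₗ⋆[ℂ] ℂ :=
  LinearMap.mk₂'ₛₗ (RingHom.id ℂ) (starRingEnd ℂ)
    (fun p q => ∫ z in sphere (0 : ℂ) 1, p.eval z * conj (q.eval z) ∂μ)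
    (fun p₁ p₂ q => by
      simp only [eval_add, add_mul]
      exact integral_add (integrableOn_sphere_eval_mul_conj_eval _ _)
        (integrableOn_sphere_eval_mul_conj_eval _ _))
    (fun c p q => by simp only [eval_smul, smul_eq_mul, mul_assoc, integral_const_mul]; rfl)
    (fun p q₁ q₂ => by
      simp only [eval_add, map_add, mul_add]
      exact integral_add (integrableOn_sphere_eval_mul_conj_eval _ _)
        (integrableOn_sphere_eval_mul_conj_eval _ _))
    (fun c p q => by
      simp only [eval_smul, smul_eq_mul, map_mul, mul_left_comm _ (conj c), integral_const_mul])

lemma circleInner_apply (p q : ℂ[X]) :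
    circleInner μ p q = ∫ z in sphere (0 : ℂ) 1, p.eval z * conj (q.eval z) ∂μ :=
  rfl

lemma circleInner_eq_integral (hμT : μ (sphere (0 : ℂ) 1)ᶜ = 0) (p q : ℂ[X]) :
    circleInner μ p q = ∫ z, p.eval z * conj (q.eval z) ∂μ := by
  rw [circleInner_apply, Measure.restrict_eq_self_of_ae_mem (ae_iff.mpr hμT)]

lemma conj_circleInner (p q : ℂ[X]) : conj (circleInner μ p q) = circleInner μ q p := by
  simp only [circleInner_apply, ← integral_conj, map_mul, Complex.conj_conj, mul_comm]

lemma circleInner_self_ne_zero (hμT : μ (sphere (0 : ℂ) 1)ᶜ = 0)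
    (hμinf : ∀ s : Finset ℂ, μ ((s : Set ℂ)ᶜ) ≠ 0) {p : ℂ[X]} (hp : p ≠ 0) :
    circleInner μ p p ≠ 0 := by
  intro h
  have hint : IntegrableOn (fun z => ‖p.eval z‖ ^ 2) (sphere 0 1) μ :=
    (by fun_prop : Continuous fun z => ‖p.eval z‖ ^ 2).continuousOn.integrableOn_compact
      (isCompact_sphere 0 1)
  simp_rw [circleInner_apply, Complex.mul_conj', ← Complex.ofReal_pow, integral_complex_ofReal,
    Complex.ofReal_eq_zero, integral_eq_zero_iff_of_nonneg (fun _ => by positivity) hint,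
    Measure.restrict_eq_self_of_ae_mem (ae_iff.mpr hμT)] at h
  refine hμinf p.roots.toFinset (measure_mono_null (fun z hz => ?_) h)
  simp_all

end CircleInner

section Christoffel

variable {φ : ℕ → ℂ[X]} {n : ℕ}

variable (φ n) in
noncomputable def christoffelPoly (u : ℂ) : ℂ[X] :=
  ∑ j ∈ Finset.range (n + 1), conj ((φ j).eval u) • φ j

lemma eval_christoffelPoly (u z : ℂ) :
    (christoffelPoly φ n u).eval z = christoffelK φ n u z := by
  simp [christoffelPoly, christoffelK, eval_finsetSum]

lemma christoffelPoly_mem_degreeLE (hφ : ∀ k, (φ k).degree ≤ k) (u : ℂ) :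
    christoffelPoly φ n u ∈ degreeLE ℂ n :=
  Submodule.sum_mem _ fun j hj => Submodule.smul_mem _ _ <| mem_degreeLE.mpr <|
    (hφ j).trans <| by exact_mod_cast Finset.mem_range_succ_iff.mp hj

lemma conj_christoffelK (u v : ℂ) : conj (christoffelK φ n u v) = christoffelK φ n v u := by
  simp only [christoffelK, map_sum, map_mul, Complex.conj_conj, mul_comm]

lemma re_christoffelK_self (u : ℂ) :
    (christoffelK φ n u u).re = ∑ j ∈ Finset.range (n + 1), ‖(φ j).eval u‖ ^ 2 := by
  simp [christoffelK, Complex.re_sum, Complex.conj_mul', ← Complex.ofReal_pow]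

lemma christoffelK_self_ne_zero (hφ0 : (φ 0).degree = 0) (u : ℂ) :
    christoffelK φ n u u ≠ 0 := by
  have hφ0u : (φ 0).eval u ≠ 0 := fun h =>
    (degree_pos_of_root (by rintro h0; simp [h0] at hφ0) h).ne' hφ0
  have hre : 0 < (christoffelK φ n u u).re := by
    rw [re_christoffelK_self]
    exact Finset.sum_pos' (fun _ _ => by positivity) ⟨0, by simp, by positivity⟩
  exact fun h => by simp [h] at hre

variable {μ : Measure ℂ} [IsFiniteMeasure μ]

lemma circleInner_christoffelPoly (hφ : ∀ k, (φ k).degree = k)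
    (horth : ∀ k m, circleInner μ (φ k) (φ m) = if k = m then 1 else 0)
    {p : ℂ[X]} (hp : p ∈ degreeLE ℂ n) (u : ℂ) :
    circleInner μ p (christoffelPoly φ n u) = p.eval u := by
  let S : Sequence ℂ := ⟨φ, hφ⟩
  have hspan : p ∈ Submodule.span ℂ (φ '' Set.Iic n) := by
    rwa [S.span_degreeLE fun i _ => (leadingCoeff_ne_zero.mpr (S.ne_zero i)).isUnit]
  clear hp
  induction hspan using Submodule.span_induction with
  | mem _ h =>
    obtain ⟨k, hk, rfl⟩ := h
    simp [christoffelPoly, map_sum, horth, (Set.mem_Iic.mp hk).not_gt]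
  | zero => simp
  | add p q _ _ hp hq => simp [hp, hq]
  | smul a p _ hp => simp [hp]
variable (φ n) in
noncomputable def paraOrthoPoly (w : ℂ) : ℂ[X] :=
  (1 - C (conj w) * X) * christoffelPoly φ n w

lemma eval_paraOrthoPoly (w z : ℂ) : (paraOrthoPoly φ n w).eval z = paraOrtho φ n w z := by
  simp [paraOrthoPoly, paraOrtho, eval_christoffelPoly]

lemma natDegree_paraOrthoPoly_le (hφ : ∀ k, (φ k).degree ≤ k) (w : ℂ) :
    (paraOrthoPoly φ n w).natDegree ≤ n + 1 := by
  refine natDegree_mul_le.trans (add_comm 1 n ▸ add_le_add ?_ ?_)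
  · exact natDegree_sub_le_of_le (natDegree_one.trans_le zero_le_one)
      ((natDegree_C_mul_le _ _).trans natDegree_X_le)
  · exact natDegree_le_iff_degree_le.mpr (mem_degreeLE.mp (christoffelPoly_mem_degreeLE hφ w))

lemma paraOrthoPoly_ne_zero (hφ0 : (φ 0).degree = 0) (w : ℂ) : paraOrthoPoly φ n w ≠ 0 := by
  refine mul_ne_zero (fun h => by simpa using congrArg (coeff · 0) h) fun h => ?_
  exact christoffelK_self_ne_zero hφ0 w (by rw [← eval_christoffelPoly, h, eval_zero])

lemma circleInner_eq_zero_of_isRoot (hφ : ∀ k, (φ k).degree = k)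
    (horth : ∀ k m, circleInner μ (φ k) (φ m) = if k = m then 1 else 0)
    {w u : ℂ} (hu : u ∈ sphere (0 : ℂ) 1) {P : ℂ[X]}
    (hP : paraOrthoPoly φ n w = (X - C u) * P)
    {q : ℂ[X]} (hq : q ∈ degreeLE ℂ n) (hqu : q.IsRoot u) :
    circleInner μ q P = 0 := by
  obtain ⟨r, rfl⟩ := dvd_iff_isRoot.mpr hqu
  have hr : (X - C w) * r ∈ degreeLE ℂ n := by
    rwa [mem_degreeLE, degree_mul, degree_X_sub_C, ← degree_X_sub_C u, ← degree_mul,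
      ← mem_degreeLE]
  have hu1 := mul_conj_eq_one_of_mem_sphere hu
  have hcircle : Set.EqOn (fun z => ((X - C u) * r).eval z * conj (P.eval z))
      (fun z => ((-u) • ((X - C w) * r)).eval z * conj ((christoffelPoly φ n w).eval z))
      (sphere 0 1) := by
    intro z hz
    have hz1 := mul_conj_eq_one_of_mem_sphere hz
    have hPz := congrArg (fun f => conj (f.eval z)) hP
    simp only [paraOrthoPoly, eval_mul, eval_sub, eval_one, eval_X, eval_C, map_mul, map_sub,
      map_one, Complex.conj_conj] at hPz
    simp only [eval_mul, eval_sub, eval_X, eval_C, eval_smul, smul_eq_mul]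
    linear_combination (-(z * u) * r.eval z) * hPz.symm
      + ((conj (P.eval z) * u + conj ((christoffelPoly φ n w).eval z) * u * w) * r.eval z) * hz1
      - (conj (P.eval z) * z * r.eval z) * hu1
  rw [circleInner_apply, setIntegral_congr_fun isClosed_sphere.measurableSet hcircle,
    ← circleInner_apply, map_smul, LinearMap.smul_apply, circleInner_christoffelPoly hφ horth hr]
  simp

lemma christoffelK_eq_zero_of_paraOrtho_eq_zero (hφ : ∀ k, (φ k).degree = k)
    (horth : ∀ k m, circleInner μ (φ k) (φ m) = if k = m then 1 else 0)
    (hμT : μ (sphere (0 : ℂ) 1)ᶜ = 0) (hμinf : ∀ s : Finset ℂ, μ ((s : Set ℂ)ᶜ) ≠ 0)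
    {w u v : ℂ} (hu : u ∈ sphere (0 : ℂ) 1) (huv : u ≠ v)
    (hBu : paraOrtho φ n w u = 0) (hBv : paraOrtho φ n w v = 0) :
    christoffelK φ n v u = 0 := by
  set P := paraOrthoPoly φ n w /ₘ (X - C u)
  have hBP : paraOrthoPoly φ n w = (X - C u) * P :=
    (mul_divByMonic_eq_iff_isRoot.mpr (by rwa [IsRoot, eval_paraOrthoPoly])).symm
  have hP0 : P ≠ 0 := fun h =>
    paraOrthoPoly_ne_zero (by simpa using hφ 0) w (by rw [hBP, h, mul_zero])
  have hPv : P.eval v = 0 := by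
    have := congrArg (eval v) hBP
    rw [eval_paraOrthoPoly, hBv, eval_mul, eval_sub, eval_X, eval_C] at this
    exact (mul_eq_zero.mp this.symm).resolve_left (sub_ne_zero.mpr huv.symm)
  have hPdeg : P ∈ degreeLE ℂ n := by
    rw [mem_degreeLE, ← natDegree_le_iff_degree_le, natDegree_divByMonic _ (monic_X_sub_C u),
      natDegree_X_sub_C]
    exact Nat.sub_le_of_le_add (natDegree_paraOrthoPoly_le (fun k => (hφ k).le) w)
  set Q := P.eval u • christoffelPoly φ n v - christoffelK φ n v u • P
  have hQ : Q ∈ degreeLE ℂ n :=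
    sub_mem (Submodule.smul_mem _ _ (christoffelPoly_mem_degreeLE (fun k => (hφ k).le) v))
      (Submodule.smul_mem _ _ hPdeg)
  have hQu : Q.IsRoot u := by simp [Q, eval_christoffelPoly, mul_comm]
  have hKvP : circleInner μ (christoffelPoly φ n v) P = 0 := by
    rw [← conj_circleInner, circleInner_christoffelPoly hφ horth hPdeg, hPv, map_zero]
  have := circleInner_eq_zero_of_isRoot hφ horth hu hBP hQ hQu
  simp only [Q, map_sub, map_smul, LinearMap.sub_apply, LinearMap.smul_apply, hKvP, smul_eq_mul,
    mul_zero, zero_sub, neg_eq_zero] at this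
  exact (mul_eq_zero.mp this).resolve_right (circleInner_self_ne_zero hμT hμinf hP0)

lemma eq_sum_smul_christoffelPoly (hφ : ∀ k, (φ k).degree ≤ k) {ζ : Fin (n + 1) → ℂ}
    (hζ : Function.Injective ζ) (hK : ∀ j k, j ≠ k → christoffelK φ n (ζ j) (ζ k) = 0)
    (hK0 : ∀ j, christoffelK φ n (ζ j) (ζ j) ≠ 0) {q : ℂ[X]} (hq : q ∈ degreeLE ℂ n) :
    q = ∑ j, (q.eval (ζ j) / christoffelK φ n (ζ j) (ζ j)) • christoffelPoly φ n (ζ j) := by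
  refine eq_of_degree_sub_lt_of_eval_index_eq Finset.univ hζ.injOn ?_ fun k _ => ?_
  · refine (mem_degreeLE.mp (sub_mem hq (Submodule.sum_mem _ fun j _ =>
      Submodule.smul_mem _ _ (christoffelPoly_mem_degreeLE hφ (ζ j))))).trans_lt ?_
    rw [Finset.card_univ, Fintype.card_fin]
    exact_mod_cast n.lt_succ_self
  · simp only [eval_finsetSum, eval_smul, eval_christoffelPoly, smul_eq_mul]
    rw [Finset.sum_eq_single k (fun j _ hjk => by rw [hK j k hjk, mul_zero]) (by simp),
      div_mul_cancel₀ _ (hK0 k)]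

lemma circleInner_eq_sum_nodes (hφ : ∀ k, (φ k).degree = k)
    (horth : ∀ k m, circleInner μ (φ k) (φ m) = if k = m then 1 else 0)
    {ζ : Fin (n + 1) → ℂ} (hζ : Function.Injective ζ)
    (hK : ∀ j k, j ≠ k → christoffelK φ n (ζ j) (ζ k) = 0)
    {p q : ℂ[X]} (hp : p ∈ degreeLE ℂ n) (hq : q ∈ degreeLE ℂ n) :
    circleInner μ p q
      = ∑ j, p.eval (ζ j) * conj (q.eval (ζ j)) / christoffelK φ n (ζ j) (ζ j) := by
  have hK0 j := christoffelK_self_ne_zero (n := n) (by simpa using hφ 0) (ζ j)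
  conv_lhs => rw [eq_sum_smul_christoffelPoly (fun k => (hφ k).le) hζ hK hK0 hq]
  simp only [map_sum, map_smulₛₗ, circleInner_christoffelPoly hφ horth hp, smul_eq_mul, map_div₀,
    conj_christoffelK]
  exact Finset.sum_congr rfl fun j _ => by ring

end Christoffel

theorem reproducing_at_nodes_and_quadrature_general
    (μ : Measure ℂ) [IsFiniteMeasure μ]
    (hμT : μ (Metric.sphere (0 : ℂ) 1)ᶜ = 0)
    (hμinf : ∀ s : Finset ℂ, μ ((s : Set ℂ)ᶜ) ≠ 0)
    (φ : ℕ → Polynomial ℂ)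
    (hdeg : ∀ k, (φ k).degree = (k : ℕ))
    (horth : ∀ k m, ∫ z, (φ k).eval z * conj ((φ m).eval z) ∂μ
        = if k = m then 1 else 0)
    (n : ℕ) (w : ℂ)
    (ζ : Fin (n + 1) → ℂ)
    (hζT : ∀ j, ζ j ∈ Metric.sphere (0 : ℂ) 1)
    (hζinj : Function.Injective ζ)
    (hζ0 : ∀ j, paraOrtho φ n w (ζ j) = 0) :
    (∀ (p : Polynomial ℂ), p.degree ≤ n → ∀ j : Fin (n + 1),
      ∫ z, p.eval z * conj (christoffelK φ n (ζ j) z)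
          / (Real.sqrt ((christoffelK φ n (ζ j) (ζ j)).re) : ℂ) ∂μ
        = p.eval (ζ j) / (Real.sqrt ((christoffelK φ n (ζ j) (ζ j)).re) : ℂ)) ∧
    (∀ (p q : Polynomial ℂ), p.degree ≤ n → q.degree ≤ n →
      ∫ z, p.eval z * conj (q.eval z) ∂μ
        = ∑ j : Fin (n + 1),
            p.eval (ζ j) * conj (q.eval (ζ j)) / christoffelK φ n (ζ j) (ζ j)) := by
  have horth' k m : circleInner μ (φ k) (φ m) = if k = m then 1 else 0 :=
    (circleInner_eq_integral hμT _ _).trans (horth k m)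
  have hK j k (hjk : j ≠ k) : christoffelK φ n (ζ j) (ζ k) = 0 :=
    christoffelK_eq_zero_of_paraOrtho_eq_zero hdeg horth' hμT hμinf (hζT k) (hζinj.ne hjk.symm)
      (hζ0 k) (hζ0 j)
  refine ⟨fun p hp j => ?_, fun p q hp hq => ?_⟩
  · simp_rw [integral_div, ← eval_christoffelPoly, ← circleInner_eq_integral hμT,
      circleInner_christoffelPoly hdeg horth' (mem_degreeLE.mpr hp)]
  · rw [← circleInner_eq_integral hμT,
      circleInner_eq_sum_nodes hdeg horth' hζinj hK (mem_degreeLE.mpr hp) (mem_degreeLE.mpr hq)]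

/-- **Reproducing property at the nodes and Szegő quadrature for `Π_n`.**
For every polynomial `p` of degree at most `n` and every `j`,
`∫_T p(z) conj(K_n(ζ_{jn}, z)) / sqrt(K_n(ζ_{jn},ζ_{jn})) dμ(z)
  = p(ζ_{jn}) / sqrt(K_n(ζ_{jn},ζ_{jn}))`;
consequently, for polynomials `p, q` of degree at most `n`,
`∫_T p conj(q) dμ = ∑_{j=0}^n p(ζ_{jn}) conj(q(ζ_{jn})) / K_n(ζ_{jn},ζ_{jn})`. -/
theorem reproducing_at_nodes_and_quadrature
    (μ : Measure ℂ) [IsFiniteMeasure μ]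
    (hμT : μ (Metric.sphere (0 : ℂ) 1)ᶜ = 0)
    (hμinf : ∀ s : Finset ℂ, μ ((s : Set ℂ)ᶜ) ≠ 0)
    (φ : ℕ → Polynomial ℂ)
    (hdeg : ∀ k, (φ k).degree = (k : ℕ))
    (hlead : ∀ k, 0 < ((φ k).leadingCoeff).re ∧ ((φ k).leadingCoeff).im = 0)
    (horth : ∀ k m, ∫ z, (φ k).eval z * conj ((φ m).eval z) ∂μ
        = if k = m then 1 else 0)
    (n : ℕ) (w : ℂ) (hw : w ∈ Metric.sphere (0 : ℂ) 1)
    (ζ : Fin (n + 1) → ℂ)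
    (hζT : ∀ j, ζ j ∈ Metric.sphere (0 : ℂ) 1)
    (hζinj : Function.Injective ζ)
    (hζ0 : ∀ j, paraOrtho φ n w (ζ j) = 0) :
    (∀ (p : Polynomial ℂ), p.degree ≤ n → ∀ j : Fin (n + 1),
      ∫ z, p.eval z * conj (christoffelK φ n (ζ j) z)
          / (Real.sqrt ((christoffelK φ n (ζ j) (ζ j)).re) : ℂ) ∂μ
        = p.eval (ζ j) / (Real.sqrt ((christoffelK φ n (ζ j) (ζ j)).re) : ℂ)) ∧
    (∀ (p q : Polynomial ℂ), p.degree ≤ n → q.degree ≤ n →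
      ∫ z, p.eval z * conj (q.eval z) ∂μ
        = ∑ j : Fin (n + 1),
            p.eval (ζ j) * conj (q.eval (ζ j)) / christoffelK φ n (ζ j) (ζ j)) :=
  reproducing_at_nodes_and_quadrature_general μ hμT hμinf φ hdeg horth n w ζ hζT hζinj hζ0
end

section
/- Let μ be a finite positive Borel measure on the unit circle T with infinite support, K_n its Christoffel kernel, w ∈ T, ζ_{0n}, …, ζ_{nn} ∈ T the zeros of B_{n+1}(w,·), μ_n := Σ_{j=0}^n (1/K_n(ζ_{jn},ζ_{jn})) δ_{ζ_{jn}}, and L_n(f) the Lagrange interpolant of f at these zeros. Then for every polynomial Q of degree at most n and every function f : T → ℂ, ∫ L_n(f) conj(Q) dμ = ∫ f conj(Q) dμ_n. -/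
open MeasureTheory Polynomial Filter
open scoped ComplexConjugate Topology

/-- The `j`-th fundamental (Lagrange) polynomial for the nodes `ζ`:
`ℓ_{jn}(z) = K_n(z, ζ_{jn}) / K_n(ζ_{jn}, ζ_{jn})`.  Note that by Hermitian symmetry of the
kernel, `K_n(z, ζ) = conj (K_n(ζ, z))`; as a *polynomial* in `z` (of degree `n`, as in the
paper) the fundamental polynomial is `z ↦ K_n(ζ_{jn}, z) / K_n(ζ_{jn}, ζ_{jn})`, with
`K_n(ζ_{jn}, ζ_{jn}) = ∑_k |φ_k(ζ_{jn})|²` a positive real number. -/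
noncomputable def ellFun (φ : ℕ → Polynomial ℂ) (n : ℕ) (ζ : Fin (n + 1) → ℂ)
    (j : Fin (n + 1)) (z : ℂ) : ℂ :=
  christoffelK φ n (ζ j) z / christoffelK φ n (ζ j) (ζ j)

/-- The `n`-th Lagrange interpolation polynomial of `f` at the nodes `ζ`:
`L_n(f)(z) = ∑_{j=0}^n f(ζ_{jn}) ℓ_{jn}(z)`. -/
noncomputable def lagrangeInterp (φ : ℕ → Polynomial ℂ) (n : ℕ) (ζ : Fin (n + 1) → ℂ)
    (f : ℂ → ℂ) (z : ℂ) : ℂ :=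
  ∑ j : Fin (n + 1), f (ζ j) * ellFun φ n ζ j z

/-- The discrete measure `μ_n = ∑_{j=0}^n (1/K_n(ζ_j,ζ_j)) δ_{ζ_j}`. -/
noncomputable def nodeMeasure (φ : ℕ → Polynomial ℂ) (n : ℕ) (ζ : Fin (n + 1) → ℂ) :
    Measure ℂ :=
  ∑ j : Fin (n + 1),
    ENNReal.ofReal (((christoffelK φ n (ζ j) (ζ j)).re)⁻¹) • Measure.dirac (ζ j)

/-- Continuity of `z ↦ K_n(w, z)`. -/
lemma continuous_christoffelK (φ : ℕ → Polynomial ℂ) (n : ℕ) (w : ℂ) :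
    Continuous (christoffelK φ n w) := by
  unfold christoffelK
  exact continuous_finset_sum _ fun j _ => continuous_const.mul (φ j).continuous

/-- A continuous function is integrable w.r.t. a finite measure supported on the circle. -/
lemma integrable_of_continuous_circle (μ : Measure ℂ) [IsFiniteMeasure μ]
    (hμT : μ (Metric.sphere (0 : ℂ) 1)ᶜ = 0) (g : ℂ → ℂ) (hg : Continuous g) :
    Integrable g μ := by
  obtain ⟨C, hC⟩ : ∃ C, ∀ z ∈ Metric.sphere (0 : ℂ) 1, ‖g z‖ ≤ C :=
    (isCompact_sphere (0 : ℂ) 1).exists_bound_of_continuousOn hg.continuousOn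
  refine (integrable_const C).mono' hg.aestronglyMeasurable ?_
  have h : ∀ᵐ z ∂μ, z ∈ Metric.sphere (0 : ℂ) 1 := by
    rw [ae_iff]
    exact measure_mono_null (fun z hz => hz) hμT
  filter_upwards [h] with z hz using hC z hz

/-- The diagonal of the Christoffel kernel is (the coercion of) a nonnegative real. -/
lemma christoffelK_diag_eq (φ : ℕ → Polynomial ℂ) (n : ℕ) (ζ : ℂ) :
    christoffelK φ n ζ ζ
      = ((∑ j ∈ Finset.range (n + 1), Complex.normSq ((φ j).eval ζ) : ℝ) : ℂ) := by
  unfold christoffelK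
  push_cast
  exact Finset.sum_congr rfl fun j _ => (Complex.normSq_eq_conj_mul_self).symm

/-- Reproducing property: `∫ K_n(ζ, z) conj(φ_m(z)) dμ = conj(φ_m(ζ))` for `m ≤ n`. -/
lemma integral_christoffelK_mul_conj_phi (μ : Measure ℂ) [IsFiniteMeasure μ]
    (hμT : μ (Metric.sphere (0 : ℂ) 1)ᶜ = 0)
    (φ : ℕ → Polynomial ℂ)
    (horth : ∀ k m, ∫ z, (φ k).eval z * conj ((φ m).eval z) ∂μ
        = if k = m then 1 else 0)
    (n : ℕ) (ζ : ℂ) (m : ℕ) (hm : m ≤ n) :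
    ∫ z, christoffelK φ n ζ z * conj ((φ m).eval z) ∂μ = conj ((φ m).eval ζ) := by
  have h1 : ∀ z : ℂ, christoffelK φ n ζ z * conj ((φ m).eval z)
      = ∑ j ∈ Finset.range (n + 1),
          conj ((φ j).eval ζ) * ((φ j).eval z * conj ((φ m).eval z)) := by
    intro z
    unfold christoffelK
    rw [Finset.sum_mul]
    exact Finset.sum_congr rfl fun j _ => by ring
  simp only [h1]
  rw [integral_finset_sum]
  · have : ∀ j ∈ Finset.range (n + 1),
        ∫ z, conj ((φ j).eval ζ) * ((φ j).eval z * conj ((φ m).eval z)) ∂μ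
          = conj ((φ j).eval ζ) * (if j = m then 1 else 0) := by
      intro j _
      rw [integral_const_mul, horth]
    rw [Finset.sum_congr rfl this]
    simp [Finset.sum_ite_eq' (Finset.range (n + 1)) m, Nat.lt_succ_of_le hm]
  · intro j _
    exact integrable_of_continuous_circle μ hμT _
      (continuous_const.mul ((φ j).continuous.mul
        (Complex.continuous_conj.comp (φ m).continuous)))

/-- Reproducing property against arbitrary polynomials of degree at most `n`. -/
lemma integral_christoffelK_mul_conj_poly (μ : Measure ℂ) [IsFiniteMeasure μ]
    (hμT : μ (Metric.sphere (0 : ℂ) 1)ᶜ = 0)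
    (φ : ℕ → Polynomial ℂ)
    (hdeg : ∀ k, (φ k).degree = (k : ℕ))
    (horth : ∀ k m, ∫ z, (φ k).eval z * conj ((φ m).eval z) ∂μ
        = if k = m then 1 else 0)
    (n : ℕ) (ζ : ℂ) :
    ∀ Q : Polynomial ℂ, Q.degree ≤ n →
      ∫ z, christoffelK φ n ζ z * conj (Q.eval z) ∂μ = conj (Q.eval ζ) := by
  suffices h : ∀ d : ℕ, ∀ Q : Polynomial ℂ, Q.natDegree ≤ d → Q.degree ≤ n →
      ∫ z, christoffelK φ n ζ z * conj (Q.eval z) ∂μ = conj (Q.eval ζ) by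
    intro Q hQ; exact h Q.natDegree Q le_rfl hQ
  intro d
  induction d using Nat.strong_induction_on with
  | _ d ih =>
    intro Q hQd hQn
    by_cases hQ0 : Q = 0
    · simp [hQ0]
    · set m : ℕ := Q.natDegree with hm
      have hmn : m ≤ n := natDegree_le_iff_degree_le.mpr hQn
      have hφm0 : (φ m).leadingCoeff ≠ 0 := by
        intro h
        have := hdeg m
        rw [leadingCoeff_eq_zero] at h
        simp [h] at this
      set c : ℂ := Q.leadingCoeff / (φ m).leadingCoeff with hc
      have hc0 : c ≠ 0 := div_ne_zero (leadingCoeff_ne_zero.mpr hQ0) hφm0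
      set R : Polynomial ℂ := Q - Polynomial.C c * φ m with hR
      have hdegCφ : (Polynomial.C c * φ m).degree = Q.degree := by
        rw [degree_C_mul hc0, hdeg m, degree_eq_natDegree hQ0]
      have hlcCφ : Q.leadingCoeff = (Polynomial.C c * φ m).leadingCoeff := by
        rw [leadingCoeff_mul, leadingCoeff_C, hc, div_mul_cancel₀ _ hφm0]
      have hRdeg : R.degree < Q.degree := degree_sub_lt hdegCφ.symm hQ0 hlcCφ
      have hRn : R.degree ≤ n := le_of_lt (lt_of_lt_of_le hRdeg hQn)
      have hQeval : ∀ z : ℂ, Q.eval z = R.eval z + c * (φ m).eval z := by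
        intro z; simp [hR]
      have hint1 : Integrable (fun z => christoffelK φ n ζ z * conj (R.eval z)) μ :=
        integrable_of_continuous_circle μ hμT _
          ((continuous_christoffelK φ n ζ).mul
            (Complex.continuous_conj.comp R.continuous))
      have hint2 : Integrable
          (fun z => christoffelK φ n ζ z * (conj c * conj ((φ m).eval z))) μ :=
        integrable_of_continuous_circle μ hμT _
          ((continuous_christoffelK φ n ζ).mul
            (continuous_const.mul (Complex.continuous_conj.comp (φ m).continuous)))
      have key : (fun z => christoffelK φ n ζ z * conj (Q.eval z))
          = fun z => christoffelK φ n ζ z * conj (R.eval z)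
              + christoffelK φ n ζ z * (conj c * conj ((φ m).eval z)) := by
        funext z
        rw [hQeval z]
        simp only [map_add, map_mul]
        ring
      rw [key, integral_add hint1 hint2]
      have hIR : ∫ z, christoffelK φ n ζ z * conj (R.eval z) ∂μ = conj (R.eval ζ) := by
        by_cases hR0 : R = 0
        · simp [hR0]
        · have hRlt : R.natDegree < m := by
            have := degree_eq_natDegree hQ0
            exact Polynomial.natDegree_lt_natDegree hR0 hRdeg
          exact ih R.natDegree (lt_of_lt_of_le hRlt hQd) R le_rfl hRn
      have hIφ : ∫ z, christoffelK φ n ζ z * (conj c * conj ((φ m).eval z)) ∂μ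
          = conj c * conj ((φ m).eval ζ) := by
        have : (fun z => christoffelK φ n ζ z * (conj c * conj ((φ m).eval z)))
            = fun z => conj c * (christoffelK φ n ζ z * conj ((φ m).eval z)) := by
          funext z; ring
        rw [this, integral_const_mul,
          integral_christoffelK_mul_conj_phi μ hμT φ horth n ζ m hmn]
      rw [hIR, hIφ, hQeval ζ]
      simp only [map_add, map_mul]

/-- For every polynomial `Q` of degree at most `n` and every function `f : T → ℂ`,
`∫ L_n(f) conj(Q) dμ = ∫ f conj(Q) dμ_n`. -/
theorem integral_lagrangeInterp_mul_conj_poly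
    (μ : Measure ℂ) [IsFiniteMeasure μ]
    (hμT : μ (Metric.sphere (0 : ℂ) 1)ᶜ = 0)
    (hμinf : ∀ s : Finset ℂ, μ ((s : Set ℂ)ᶜ) ≠ 0)
    (φ : ℕ → Polynomial ℂ)
    (hdeg : ∀ k, (φ k).degree = (k : ℕ))
    (hlead : ∀ k, 0 < ((φ k).leadingCoeff).re ∧ ((φ k).leadingCoeff).im = 0)
    (horth : ∀ k m, ∫ z, (φ k).eval z * conj ((φ m).eval z) ∂μ
        = if k = m then 1 else 0)
    (n : ℕ) (w : ℂ) (hw : w ∈ Metric.sphere (0 : ℂ) 1)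
    (ζ : Fin (n + 1) → ℂ)
    (hζT : ∀ j, ζ j ∈ Metric.sphere (0 : ℂ) 1)
    (hζinj : Function.Injective ζ)
    (hζ0 : ∀ j, paraOrtho φ n w (ζ j) = 0)
    (Q : Polynomial ℂ) (hQ : Q.degree ≤ n) (f : ℂ → ℂ) :
    ∫ z, lagrangeInterp φ n ζ f z * conj (Q.eval z) ∂μ
      = ∫ z, f z * conj (Q.eval z) ∂(nodeMeasure φ n ζ) := by
  -- notation
  set D : Fin (n + 1) → ℂ := fun j => christoffelK φ n (ζ j) (ζ j) with hD
  set S : Fin (n + 1) → ℝ :=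
    fun j => ∑ k ∈ Finset.range (n + 1), Complex.normSq ((φ k).eval (ζ j)) with hS
  have hDS : ∀ j, D j = ((S j : ℝ) : ℂ) := fun j => christoffelK_diag_eq φ n (ζ j)
  have hSnonneg : ∀ j, 0 ≤ S j := fun j =>
    Finset.sum_nonneg fun k _ => Complex.normSq_nonneg _
  -- left-hand side
  have hL : ∫ z, lagrangeInterp φ n ζ f z * conj (Q.eval z) ∂μ
      = ∑ j : Fin (n + 1), f (ζ j) * (D j)⁻¹ * conj (Q.eval (ζ j)) := by
    have h1 : ∀ z : ℂ, lagrangeInterp φ n ζ f z * conj (Q.eval z)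
        = ∑ j : Fin (n + 1),
            f (ζ j) * (D j)⁻¹ * (christoffelK φ n (ζ j) z * conj (Q.eval z)) := by
      intro z
      unfold lagrangeInterp ellFun
      rw [Finset.sum_mul]
      refine Finset.sum_congr rfl fun j _ => ?_
      rw [div_eq_mul_inv]
      ring
    simp only [h1]
    rw [integral_finset_sum]
    · refine Finset.sum_congr rfl fun j _ => ?_
      rw [integral_const_mul,
        integral_christoffelK_mul_conj_poly μ hμT φ hdeg horth n (ζ j) Q hQ]
    · intro j _
      exact integrable_of_continuous_circle μ hμT _
        (continuous_const.mul ((continuous_christoffelK φ n (ζ j)).mul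
          (Complex.continuous_conj.comp Q.continuous)))
  -- right-hand side
  have hR : ∫ z, f z * conj (Q.eval z) ∂(nodeMeasure φ n ζ)
      = ∑ j : Fin (n + 1), ((S j)⁻¹ : ℝ) • (f (ζ j) * conj (Q.eval (ζ j))) := by
    unfold nodeMeasure
    set g : ℂ → ℂ := fun z => f z * conj (Q.eval z) with hg
    have hgae : ∀ j : Fin (n + 1), g =ᵐ[Measure.dirac (ζ j)] fun _ => g (ζ j) := by
      intro j
      rw [Filter.EventuallyEq, ae_iff]
      refine measure_mono_null (t := {ζ j}ᶜ) (fun z hz => ?_) ?_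
      · exact (Set.mem_compl_singleton_iff).mpr fun h => hz (by rw [h])
      · rw [Measure.dirac_apply' _ (measurableSet_singleton (ζ j)).compl]
        simp
    have hgint : ∀ j : Fin (n + 1), Integrable g
        (ENNReal.ofReal ((D j).re)⁻¹ • Measure.dirac (ζ j)) := by
      intro j
      exact ((integrable_const (g (ζ j))).congr (hgae j).symm).smul_measure
        ENNReal.ofReal_ne_top
    rw [integral_finset_sum_measure fun j _ => hgint j]
    refine Finset.sum_congr rfl fun j _ => ?_
    rw [integral_smul_measure, integral_dirac g (ζ j),
      ENNReal.toReal_ofReal (inv_nonneg.mpr (by rw [hDS j]; simpa using hSnonneg j))]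
    congr 1
    rw [hDS j]
    simp
  rw [hL, hR]
  refine Finset.sum_congr rfl fun j _ => ?_
  rw [hDS j, Complex.real_smul]
  push_cast
  ring
end
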